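/- Let φ be an indecomposable 𝔖∞-central state on G = Γ≀𝔖∞ with GNS triple (π, H, ξ). Then for every g ∈ G and all x, y ∈ H, lim_{n→∞} ⟨π(ω_n·g·ω_n)x, y⟩ = φ(g)·⟨x, y⟩; i.e. the weak operator limit of π(ω_n g ω_n) exists and equals φ(g)·I. -/

import Mathlib

open scoped Classical ComplexOrder
open Filter Topology

noncomputable section

namespace DN

local notation "⟪" x ", " y "⟫" => @inner ℂ _ _ x y

/-- The group `𝔖∞` of finitely supported permutations of `ℕ`. -/
def SInf : Subgroup (Equiv.Perm ℕ) where
  carrier := {s | {i | s i ≠ i}.Finite}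
  one_mem' := by simp
  mul_mem' := by
    intro s t hs ht
    refine Set.Finite.subset (hs.union ht) fun i hi => ?_
    simp only [Set.mem_setOf_eq, Set.mem_union, Equiv.Perm.mul_apply] at hi ⊢
    by_contra h
    push_neg at h
    rw [h.2, h.1] at hi
    exact hi rfl
  inv_mem' := by
    intro s hs
    refine Set.Finite.subset hs fun i hi => ?_
    simp only [Set.mem_setOf_eq] at hi ⊢
    intro h
    exact hi (Equiv.Perm.inv_eq_iff_eq.mpr h.symm)

theorem mem_SInf (s : Equiv.Perm ℕ) : s ∈ SInf ↔ {i | s i ≠ i}.Finite := Iff.rfl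

/-- The group `Γ^∞_e` of finitely supported sequences in `Γ`. -/
def GammaE (Γ : Type*) [Group Γ] : Subgroup (ℕ → Γ) where
  carrier := {γ | {i | γ i ≠ 1}.Finite}
  one_mem' := by simp
  mul_mem' := by
    intro f g hf hg
    refine Set.Finite.subset (hf.union hg) fun i hi => ?_
    simp only [Set.mem_setOf_eq, Set.mem_union, Pi.mul_apply] at hi ⊢
    by_contra h
    push_neg at h
    rw [h.1, h.2] at hi
    exact hi (one_mul 1)
  inv_mem' := by
    intro f hf
    refine Set.Finite.subset hf fun i hi => ?_
    simp only [Set.mem_setOf_eq, Pi.inv_apply, ne_eq, inv_eq_one] at hi ⊢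
    exact hi

theorem mem_GammaE {Γ : Type*} [Group Γ] (γ : ℕ → Γ) :
    γ ∈ GammaE Γ ↔ {i | γ i ≠ 1}.Finite := Iff.rfl

/-- The permutation action of `Equiv.Perm ℕ` on `ℕ → Γ`. -/
def permMulAut (Γ : Type*) [Group Γ] (s : Equiv.Perm ℕ) : MulAut (ℕ → Γ) where
  toFun γ := γ ∘ s.symm
  invFun γ := γ ∘ s
  left_inv γ := by funext i; simp [Function.comp]
  right_inv γ := by funext i; simp [Function.comp]
  map_mul' γ δ := rfl

def permAction (Γ : Type*) [Group Γ] : Equiv.Perm ℕ →* MulAut (ℕ → Γ) where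
  toFun := permMulAut Γ
  map_one' := by ext γ i; rfl
  map_mul' s t := by ext γ i; rfl

/-- The (big) wreath product `(ℕ → Γ) ⋊ Perm ℕ`. -/
abbrev W (Γ : Type*) [Group Γ] := (ℕ → Γ) ⋊[permAction Γ] Equiv.Perm ℕ

/-- The wreath product `G = Γ ≀ 𝔖∞`, as the subgroup of `W Γ` of finitely
supported elements. -/
def WG (Γ : Type*) [Group Γ] : Subgroup (W Γ) where
  carrier := {g | {i | g.right i ≠ i}.Finite ∧ {i | g.left i ≠ 1}.Finite}
  one_mem' := by
    constructor
    · convert Set.finite_empty using 1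
      ext i; simp
    · convert Set.finite_empty using 1
      ext i; simp
  mul_mem' := by
    rintro a b ⟨ha1, ha2⟩ ⟨hb1, hb2⟩
    constructor
    · refine Set.Finite.subset (ha1.union hb1) fun i hi => ?_
      simp only [Set.mem_setOf_eq, Set.mem_union, SemidirectProduct.mul_right,
        Equiv.Perm.mul_apply] at hi ⊢
      by_contra h
      push_neg at h
      rw [h.2, h.1] at hi
      exact hi rfl
    · refine Set.Finite.subset (ha2.union (hb2.image a.right)) fun i hi => ?_
      simp only [Set.mem_setOf_eq, SemidirectProduct.mul_left, Pi.mul_apply] at hi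
      by_contra h
      simp only [Set.mem_union, Set.mem_setOf_eq, Set.mem_image, not_or, not_exists,
        not_and, not_not] at h
      obtain ⟨h1, h2⟩ := h
      apply hi
      have hb : b.left (a.right⁻¹ i) = 1 := by
        by_contra hc
        exact h2 (a.right⁻¹ i) hc (by simp)
      have hrfl : (permAction Γ a.right b.left) i = b.left (a.right⁻¹ i) := rfl
      rw [h1, one_mul, hrfl, hb]
  inv_mem' := by
    rintro a ⟨ha1, ha2⟩
    constructor
    · refine Set.Finite.subset ha1 fun i hi => ?_
      simp only [Set.mem_setOf_eq, SemidirectProduct.inv_right] at hi ⊢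
      intro h
      exact hi (Equiv.Perm.inv_eq_iff_eq.mpr h.symm)
    · refine Set.Finite.subset (Set.Finite.preimage (a.right.injective.injOn) ha2)
        fun i hi => ?_
      simp only [Set.mem_setOf_eq] at hi
      simp only [Set.mem_preimage, Set.mem_setOf_eq]
      intro h
      apply hi
      have hrfl : (a⁻¹).left i = (a.left (a.right i))⁻¹ := rfl
      rw [hrfl, h, inv_one]

theorem mem_WG {Γ : Type*} [Group Γ] (g : W Γ) :
    g ∈ WG Γ ↔ {i | g.right i ≠ i}.Finite ∧ {i | g.left i ≠ 1}.Finite := Iff.rfl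

/-- The canonical copy of `𝔖∞` inside `Γ ≀ 𝔖∞`. -/
def permW {Γ : Type*} [Group Γ] (s : SInf) : WG Γ :=
  ⟨SemidirectProduct.inr s.1, by
    rw [mem_WG]
    constructor
    · have h : (SemidirectProduct.inr s.1 : W Γ).right = s.1 := SemidirectProduct.right_inr _
      rw [h]
      exact s.2
    · convert Set.finite_empty using 1
      ext i; simp⟩

/-- The canonical copy of `Γ^∞_e` inside `Γ ≀ 𝔖∞`. -/
def seqW {Γ : Type*} [Group Γ] (γ : GammaE Γ) : WG Γ :=
  ⟨SemidirectProduct.inl γ.1, by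
    rw [mem_WG]
    constructor
    · convert Set.finite_empty using 1
      ext i; simp
    · have h : (SemidirectProduct.inl γ.1 : W Γ).left = γ.1 := SemidirectProduct.left_inl _
      rw [h]
      exact γ.2⟩

/-- The support of an element of `Γ ≀ 𝔖∞`. -/
def supp {Γ : Type*} [Group Γ] (g : WG Γ) : Set ℕ :=
  {i | (g : W Γ).right i ≠ i ∨ (g : W Γ).left i ≠ 1}

/-- Positive definiteness of a function on a group. -/
def IsPosDef {G : Type*} [Group G] (φ : G → ℂ) : Prop :=
  ∀ (m : ℕ) (g : Fin m → G) (c : Fin m → ℂ),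
    0 ≤ ∑ i, ∑ j, c i * (starRingEnd ℂ) (c j) * φ ((g j)⁻¹ * g i)

/-- A state on a group: normalized positive definite function. -/
def IsState {G : Type*} [Group G] (φ : G → ℂ) : Prop := φ 1 = 1 ∧ IsPosDef φ

/-- `𝔖∞`-centrality of a function on `Γ ≀ 𝔖∞`. -/
def IsSCentral {Γ : Type*} [Group Γ] (φ : WG Γ → ℂ) : Prop :=
  ∀ (s : SInf) (g : WG Γ), φ (permW s * g * (permW s)⁻¹) = φ g

/-- The commutant of a set of bounded operators. -/
def commutant {H : Type*} [NormedAddCommGroup H] [InnerProductSpace ℂ H]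
    (S : Set (H →L[ℂ] H)) : Set (H →L[ℂ] H) := {T | ∀ A ∈ S, T * A = A * T}

variable {Γ : Type*} [Group Γ]
variable {H : Type*} [NormedAddCommGroup H] [InnerProductSpace ℂ H] [CompleteSpace H]

/-- The image set `π(G)` of a representation. -/
def repSet (π : WG Γ →* (H →L[ℂ] H)) : Set (H →L[ℂ] H) := Set.range fun g : WG Γ => π g

/-- The von Neumann algebra `π(G)''` (double commutant). -/
def vN (π : WG Γ →* (H →L[ℂ] H)) : Set (H →L[ℂ] H) := commutant (commutant (repSet π))

/-- The representation is factorial: the center `π(G)' ∩ π(G)''` consists of scalars. -/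
def IsFactorial (π : WG Γ →* (H →L[ℂ] H)) : Prop :=
  ∀ T ∈ commutant (repSet π) ∩ vN π, ∃ c : ℂ, T = c • (1 : H →L[ℂ] H)

/-- `(π, H, ξ)` is a GNS triple for `φ`. -/
structure IsGNS (φ : WG Γ → ℂ) (π : WG Γ →* (H →L[ℂ] H)) (ξ : H) : Prop where
  unitary : ∀ g, π g ∈ unitary (H →L[ℂ] H)
  norm_one : ‖ξ‖ = 1
  cyclic : Dense ((Submodule.span ℂ (Set.range fun g : WG Γ => π g ξ) : Submodule ℂ H) : Set H)
  inner_eq : ∀ g, φ g = ⟪ξ, π g ξ⟫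

theorem swap_mem_SInf (a b : ℕ) : Equiv.swap a b ∈ SInf := by
  rw [mem_SInf]
  refine Set.Finite.subset ((Set.finite_singleton a).insert b) fun i hi => ?_
  simp only [Set.mem_setOf_eq] at hi
  simp only [Set.mem_insert_iff, Set.mem_singleton_iff]
  by_contra h
  push_neg at h
  exact hi (Equiv.swap_apply_of_ne_of_ne h.2 h.1)

/-- The transposition `(a b)` as an element of `Γ ≀ 𝔖∞`. -/
def swapW {Γ : Type*} [Group Γ] (a b : ℕ) : WG Γ := permW ⟨Equiv.swap a b, swap_mem_SInf a b⟩

def omegaFun (n i : ℕ) : ℕ := if i < n then i + n else if i < 2 * n then i - n else i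

theorem omegaFun_invol (n i : ℕ) : omegaFun n (omegaFun n i) = i := by
  unfold omegaFun
  split_ifs <;> first | contradiction | omega

/-- Olshanski's permutation `ω_n`. -/
def omegaPerm (n : ℕ) : Equiv.Perm ℕ :=
  ⟨omegaFun n, omegaFun n, omegaFun_invol n, omegaFun_invol n⟩

theorem omegaPerm_mem (n : ℕ) : omegaPerm n ∈ SInf := by
  rw [mem_SInf]
  refine Set.Finite.subset (Set.finite_Iio (2 * n)) fun i hi => ?_
  simp only [Set.mem_setOf_eq] at hi
  simp only [Set.mem_Iio]
  by_contra h
  push_neg at h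
  apply hi
  show omegaFun n i = i
  unfold omegaFun
  split_ifs <;> first | contradiction | omega

/-- `ω_n` as an element of `Γ ≀ 𝔖∞`. -/
def omegaW {Γ : Type*} [Group Γ] (n : ℕ) : WG Γ := permW ⟨omegaPerm n, omegaPerm_mem n⟩

def sigmaFun (n i : ℕ) : ℕ := if i + 1 < n then i + 1 else if i + 1 = n then 0 else i

def sigmaInvFun (n i : ℕ) : ℕ := if i < n then (if i = 0 then n - 1 else i - 1) else i

theorem sigma_left_inv (n i : ℕ) : sigmaInvFun n (sigmaFun n i) = i := by
  unfold sigmaFun sigmaInvFun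
  split_ifs <;> first | contradiction | omega

theorem sigma_right_inv (n i : ℕ) : sigmaFun n (sigmaInvFun n i) = i := by
  unfold sigmaFun sigmaInvFun
  split_ifs <;> first | contradiction | omega

/-- The cycle `σ_n = (0 1 2 ... n-1)`. -/
def sigmaPerm (n : ℕ) : Equiv.Perm ℕ :=
  ⟨sigmaFun n, sigmaInvFun n, sigma_left_inv n, sigma_right_inv n⟩

theorem sigmaPerm_mem (n : ℕ) : sigmaPerm n ∈ SInf := by
  rw [mem_SInf]
  refine Set.Finite.subset (Set.finite_Iio n) fun i hi => ?_
  simp only [Set.mem_setOf_eq] at hi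
  simp only [Set.mem_Iio]
  by_contra h
  push_neg at h
  apply hi
  show sigmaFun n i = i
  unfold sigmaFun
  split_ifs <;> first | contradiction | omega

/-- The cycle of `s` through the point `i` (the paper's `s_p` for the orbit `p` of `i`). -/
def cycleAt (s : Equiv.Perm ℕ) (i : ℕ) : Equiv.Perm ℕ where
  toFun j := if s.SameCycle i j then s j else j
  invFun j := if s.SameCycle i j then s⁻¹ j else j
  left_inv j := by
    by_cases h : s.SameCycle i j
    · have h2 : s.SameCycle i (s j) := Equiv.Perm.sameCycle_apply_right.mpr h
      simp [h, h2]
    · simp [h]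
  right_inv j := by
    by_cases h : s.SameCycle i j
    · have h2 : s.SameCycle i (s⁻¹ j) := Equiv.Perm.sameCycle_symm_apply_right.mpr h
      simp [h, h2]
    · simp [h]

theorem cycleAt_mem {s : Equiv.Perm ℕ} (hs : s ∈ SInf) (i : ℕ) : cycleAt s i ∈ SInf := by
  rw [mem_SInf] at hs ⊢
  refine Set.Finite.subset hs fun j hj => ?_
  simp only [Set.mem_setOf_eq] at hj ⊢
  intro h
  apply hj
  show (if s.SameCycle i j then s j else j) = j
  split_ifs with hc
  · exact h
  · rfl

/-- The generalized cycle of `g = sγ` corresponding to the orbit of `i` under `s`. -/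
def genCycle {Γ : Type*} [Group Γ] (g : WG Γ) (i : ℕ) : WG Γ :=
  permW ⟨cycleAt (g : W Γ).right i, cycleAt_mem g.2.1 i⟩ *
  seqW ⟨fun k => if ((g : W Γ).right).SameCycle i k then (g : W Γ).left ((g : W Γ).right k)
      else 1, by
    rw [mem_GammaE]
    refine Set.Finite.subset (Set.Finite.preimage ((g : W Γ).right.injective.injOn) g.2.2)
      fun k hk => ?_
    simp only [Set.mem_setOf_eq] at hk
    simp only [Set.mem_preimage, Set.mem_setOf_eq]
    by_cases hsc : ((g : W Γ).right).SameCycle i k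
    · rw [if_pos hsc] at hk; exact hk
    · rw [if_neg hsc] at hk; exact absurd rfl hk⟩

/-- The von Neumann algebra `𝔄_j` generated by `O_j` and the `π(γ)` with `γ` supported at `j`. -/
def Aj (π : WG Γ →* (H →L[ℂ] H)) (O : H →L[ℂ] H) (j : ℕ) : Set (H →L[ℂ] H) :=
  commutant (commutant
    ({O} ∪ {T | ∃ γ : GammaE Γ, (∀ i, i ≠ j → (γ : ℕ → Γ) i = 1) ∧ T = π (seqW γ)}))

/-!
Write `A n = π (ω_n g ω_n)`. These are contractions, and the closed unit ball of `B(H)` is compact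
in the weak operator topology (seen here through the matrix coefficients `x y ↦ ⟪y, A x⟫`), so it
suffices to show that every weak cluster point `T` of `(A n)` equals `φ g • 1`. The element
`ω_n g ω_n` is supported in `[n, ∞)`, so it eventually commutes with any fixed `h`; hence
`T ∈ π(G)'`. Each `A n` lies in `π(G)`, hence `T ∈ π(G)''`. By factoriality `T = c • 1`, and
`c = ⟪ξ, T ξ⟫ = φ g` because `⟪ξ, A n ξ⟫ = φ (ω_n g ω_n) = φ g` by `𝔖∞`-centrality.
-/

@[simp]
theorem permAction_apply (s : Equiv.Perm ℕ) (γ : ℕ → Γ) (i : ℕ) :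
    permAction Γ s γ i = γ (s⁻¹ i) := rfl

theorem supp_finite (g : WG Γ) : (supp g).Finite := g.2.1.union g.2.2

theorem right_apply_of_notMem_supp {g : WG Γ} {i : ℕ} (hi : i ∉ supp g) :
    (g : W Γ).right i = i := by
  simp only [supp, Set.mem_ofPred_eq, not_or, not_not] at hi
  exact hi.1

theorem left_apply_of_notMem_supp {g : WG Γ} {i : ℕ} (hi : i ∉ supp g) :
    (g : W Γ).left i = 1 := by
  simp only [supp, Set.mem_ofPred_eq, not_or, not_not] at hi
  exact hi.2

theorem inv_right_apply_mem_supp {g : WG Γ} {i : ℕ} (hi : i ∈ supp g) :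
    (g : W Γ).right⁻¹ i ∈ supp g := by
  by_contra h
  have hfix : (g : W Γ).right⁻¹ i = i := by simpa using (right_apply_of_notMem_supp h).symm
  rw [hfix] at h
  exact h hi

theorem left_apply_inv_right_of_disjoint {g h : WG Γ} (hd : Disjoint (supp g) (supp h)) (i : ℕ) :
    (h : W Γ).left ((g : W Γ).right⁻¹ i) = (h : W Γ).left i := by
  by_cases hi : i ∈ supp g
  · rw [left_apply_of_notMem_supp (hd.notMem_of_mem_left (inv_right_apply_mem_supp hi)),
      left_apply_of_notMem_supp (hd.notMem_of_mem_left hi)]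
  · rw [Equiv.Perm.inv_eq_iff_eq.2 (right_apply_of_notMem_supp hi).symm]

theorem commute_of_disjoint_supp {g h : WG Γ} (hd : Disjoint (supp g) (supp h)) : Commute g h := by
  refine Subtype.ext (SemidirectProduct.ext ?_ ?_)
  · funext i
    simp only [Subgroup.coe_mul, SemidirectProduct.mul_left, Pi.mul_apply, permAction_apply,
      left_apply_inv_right_of_disjoint hd, left_apply_inv_right_of_disjoint hd.symm]
    by_cases hi : i ∈ supp g
    · rw [left_apply_of_notMem_supp (hd.notMem_of_mem_left hi), mul_one, one_mul]
    · rw [left_apply_of_notMem_supp hi, mul_one, one_mul]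
  · have : Equiv.Perm.Disjoint (g : W Γ).right (h : W Γ).right := fun i => by
      by_cases hi : i ∈ supp g
      · exact .inr (right_apply_of_notMem_supp (hd.notMem_of_mem_left hi))
      · exact .inl (right_apply_of_notMem_supp hi)
    simpa using this.commute.eq

theorem permW_conj_right (s : SInf) (g : WG Γ) :
    ((permW s * g * (permW s)⁻¹ : WG Γ) : W Γ).right = s.1 * (g : W Γ).right * s.1⁻¹ := by
  simp [permW]

theorem permW_conj_left (s : SInf) (g : WG Γ) (i : ℕ) :
    ((permW s * g * (permW s)⁻¹ : WG Γ) : W Γ).left i = (g : W Γ).left (s.1⁻¹ i) := by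
  simp [permW]

theorem supp_permW_conj (s : SInf) (g : WG Γ) :
    supp (permW s * g * (permW s)⁻¹) = s.1 '' supp g := by
  ext i
  rw [Equiv.image_eq_preimage_symm]
  simp only [supp, Set.mem_ofPred_eq, Set.mem_preimage, permW_conj_right, permW_conj_left,
    Equiv.Perm.mul_apply, Ne, ← Equiv.eq_symm_apply]
  rfl

theorem omegaW_mul_self (n : ℕ) : (omegaW n * omegaW n : WG Γ) = 1 :=
  Subtype.ext (SemidirectProduct.ext (by simp [omegaW, permW])
    (Equiv.ext fun i => omegaFun_invol n i))

theorem omegaW_mul_mul_omegaW (n : ℕ) (g : WG Γ) :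
    omegaW n * g * omegaW n
      = permW ⟨omegaPerm n, omegaPerm_mem n⟩ * g * (permW ⟨omegaPerm n, omegaPerm_mem n⟩)⁻¹ := by
  change _ = omegaW n * g * (omegaW n)⁻¹
  rw [inv_eq_of_mul_eq_one_left (omegaW_mul_self n)]

theorem supp_omegaW_conj_subset {g : WG Γ} {n : ℕ} (hg : supp g ⊆ Set.Iio n) :
    supp (omegaW n * g * omegaW n) ⊆ Set.Ici n := by
  rw [omegaW_mul_mul_omegaW, supp_permW_conj]
  rintro _ ⟨i, hi, rfl⟩
  have hi : i < n := hg hi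
  simp only [Set.mem_Ici, omegaPerm, Equiv.coe_fn_mk, omegaFun, if_pos hi]
  omega

theorem eventually_commute_omegaW_conj (g h : WG Γ) :
    ∀ᶠ n in atTop, Commute (omegaW n * g * omegaW n) h := by
  obtain ⟨N, hN⟩ := ((supp_finite g).union (supp_finite h)).bddAbove
  filter_upwards [eventually_gt_atTop N] with n hn
  have hsub : supp g ∪ supp h ⊆ Set.Iio n := fun i hi => (hN hi).trans_lt hn
  refine commute_of_disjoint_supp (Set.disjoint_left.2 fun i hig hih => ?_)
  have hi₁ : n ≤ i := supp_omegaW_conj_subset (Set.union_subset_iff.1 hsub).1 hig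
  have hi₂ : i < n := hsub (.inr hih)
  omega

theorem IsSCentral.apply_omegaW_conj {φ : WG Γ → ℂ} (hφ : IsSCentral φ) (n : ℕ) (g : WG Γ) :
    φ (omegaW n * g * omegaW n) = φ g := by
  rw [omegaW_mul_mul_omegaW, hφ]

section WeakOperatorTopology

variable {E : Type*} [NormedAddCommGroup E] [InnerProductSpace ℂ E]

def matrixCoeff (A : E →L[ℂ] E) : E → E → ℂ := fun x y => ⟪y, A x⟫

variable (E) in
def sesqFormBall : Set (E → E → ℂ) :=
  {F | (∀ x x' y, F (x + x') y = F x y + F x' y) ∧ (∀ (c : ℂ) x y, F (c • x) y = c * F x y) ∧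
    (∀ x y y', F x (y + y') = F x y + F x y') ∧
    (∀ (c : ℂ) x y, F x (c • y) = starRingEnd ℂ c * F x y) ∧
    ∀ x y, ‖F x y‖ ≤ ‖x‖ * ‖y‖}

theorem isClosed_sesqFormBall : IsClosed (sesqFormBall E) := by
  have hev : ∀ x y : E, Continuous fun F : E → E → ℂ => F x y := fun x y =>
    (continuous_apply y).comp (continuous_apply x)
  simp only [sesqFormBall, Set.ofPred_and, Set.ofPred_forall]
  refine .inter ?_ (.inter ?_ (.inter ?_ (.inter ?_ ?_))) <;>
    refine isClosed_iInter fun _ => isClosed_iInter fun _ => ?_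
  · exact isClosed_iInter fun _ => isClosed_eq (hev _ _) ((hev _ _).add (hev _ _))
  · exact isClosed_iInter fun _ => isClosed_eq (hev _ _) ((hev _ _).const_mul _)
  · exact isClosed_iInter fun _ => isClosed_eq (hev _ _) ((hev _ _).add (hev _ _))
  · exact isClosed_iInter fun _ => isClosed_eq (hev _ _) ((hev _ _).const_mul _)
  · exact isClosed_le (hev _ _).norm continuous_const

theorem isCompact_sesqFormBall : IsCompact (sesqFormBall E) := by
  refine (isCompact_univ_pi fun x => isCompact_univ_pi fun y =>
    isCompact_closedBall (0 : ℂ) (‖x‖ * ‖y‖)).of_isClosed_subset isClosed_sesqFormBall ?_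
  intro F hF x _ y _
  simpa using hF.2.2.2.2 x y

theorem matrixCoeff_mem_sesqFormBall {A : E →L[ℂ] E} (hA : ‖A‖ ≤ 1) :
    matrixCoeff A ∈ sesqFormBall E := by
  refine ⟨fun x x' y => ?_, fun c x y => ?_, fun x y y' => ?_, fun c x y => ?_, fun x y => ?_⟩
  · simp [matrixCoeff]
  · simp [matrixCoeff]
  · simp [matrixCoeff]
  · simp [matrixCoeff, mul_comm]
  · calc ‖⟪y, A x⟫‖ ≤ ‖y‖ * ‖A x‖ := norm_inner_le_norm _ _
      _ ≤ ‖y‖ * ‖x‖ := by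
        gcongr; simpa using A.le_of_opNorm_le hA x
      _ = ‖x‖ * ‖y‖ := mul_comm _ _

theorem inner_apply_eq_of_mapClusterPt {A : ℕ → E →L[ℂ] E} {T : E →L[ℂ] E}
    (hT : MapClusterPt (matrixCoeff T) atTop (matrixCoeff ∘ A))
    {x y : E} {c : ℂ} (h : ∀ᶠ n in atTop, ⟪y, A n x⟫ = c) : ⟪y, T x⟫ = c :=
  (isClosed_eq ((continuous_apply y).comp (continuous_apply x)) continuous_const
    |>.mem_of_mapClusterPt (s := {F : E → E → ℂ | F x y = c}) hT h)

variable [CompleteSpace E]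

theorem exists_matrixCoeff_eq {F : E → E → ℂ} (hF : F ∈ sesqFormBall E) :
    ∃ A : E →L[ℂ] E, ‖A‖ ≤ 1 ∧ matrixCoeff A = F := by
  obtain ⟨hadd₁, hsmul₁, hadd₂, hsmul₂, hbound⟩ := hF
  let B : E →L⋆[ℂ] E →L[ℂ] ℂ := LinearMap.mkContinuous₂
    (LinearMap.mk₂'ₛₗ (starRingEnd ℂ) (RingHom.id ℂ) (fun y x => F x y)
      (fun y y' x => hadd₂ x y y') (fun c y x => hsmul₂ c x y)
      (fun y x x' => hadd₁ x x' y) (fun c y x => hsmul₁ c x y))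
    1 (fun y x => by simpa [mul_comm] using hbound x y)
  have hB : ‖B‖ ≤ 1 := LinearMap.mkContinuous₂_norm_le _ zero_le_one _
  refine ⟨ContinuousLinearMap.adjoint (InnerProductSpace.continuousLinearMapOfBilin B), ?_, ?_⟩
  · rw [LinearIsometryEquiv.norm_map]
    refine ContinuousLinearMap.opNorm_le_bound _ zero_le_one fun y => ?_
    simpa [InnerProductSpace.continuousLinearMapOfBilin] using B.le_of_opNorm_le hB y
  · ext x y
    rw [matrixCoeff, ContinuousLinearMap.adjoint_inner_right,
      InnerProductSpace.continuousLinearMapOfBilin_apply]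
    rfl

theorem isCompact_image_matrixCoeff_closedBall :
    IsCompact (matrixCoeff '' Metric.closedBall (0 : E →L[ℂ] E) 1) := by
  convert isCompact_sesqFormBall (E := E)
  refine Set.Subset.antisymm ?_ fun F hF => ?_
  · rintro _ ⟨A, hA, rfl⟩
    exact matrixCoeff_mem_sesqFormBall (by simpa using hA)
  · obtain ⟨A, hA, rfl⟩ := exists_matrixCoeff_eq hF
    exact ⟨A, by simpa using hA, rfl⟩

theorem tendsto_inner_apply_of_unique_mapClusterPt {A : ℕ → E →L[ℂ] E} (hA : ∀ n, ‖A n‖ ≤ 1)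
    {T₀ : E →L[ℂ] E} (h : ∀ T, MapClusterPt (matrixCoeff T) atTop (matrixCoeff ∘ A) → T = T₀)
    (x y : E) : Tendsto (fun n => ⟪y, A n x⟫) atTop (𝓝 ⟪y, T₀ x⟫) := by
  have hlim : Tendsto (matrixCoeff ∘ A) atTop (𝓝 (matrixCoeff T₀)) := by
    refine isCompact_image_matrixCoeff_closedBall.tendsto_nhds_of_unique_mapClusterPt
      (Eventually.of_forall fun n => ⟨A n, by simpa using hA n, rfl⟩) ?_
    rintro _ ⟨T, -, rfl⟩ hT
    rw [h T hT]
  exact tendsto_pi_nhds.1 (tendsto_pi_nhds.1 hlim x) y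

theorem mul_comm_of_mapClusterPt {A : ℕ → E →L[ℂ] E} {T : E →L[ℂ] E}
    (hT : MapClusterPt (matrixCoeff T) atTop (matrixCoeff ∘ A)) {S : E →L[ℂ] E}
    (h : ∀ᶠ n in atTop, A n * S = S * A n) : T * S = S * T := by
  have hcoeff : ∀ x y, ⟪y, T (S x)⟫ = ⟪ContinuousLinearMap.adjoint S y, T x⟫ := by
    intro x y
    have hclosed : IsClosed {F : E → E → ℂ | F (S x) y = F x (ContinuousLinearMap.adjoint S y)} :=
      isClosed_eq ((continuous_apply y).comp (continuous_apply _))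
        ((continuous_apply _).comp (continuous_apply x))
    refine hclosed.mem_of_mapClusterPt hT (h.mono fun n hn => ?_)
    simp only [Set.mem_ofPred_eq, Function.comp_apply, matrixCoeff,
      ContinuousLinearMap.adjoint_inner_left]
    rw [← mul_apply_eq_comp, hn, mul_apply_eq_comp]
  ext x
  refine ext_inner_left ℂ fun y => ?_
  rw [mul_apply_eq_comp, mul_apply_eq_comp, hcoeff,
    ContinuousLinearMap.adjoint_inner_left]

end WeakOperatorTopology

theorem IsGNS.inner_self {φ : WG Γ → ℂ} {π : WG Γ →* (H →L[ℂ] H)} {ξ : H}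
    (hGNS : IsGNS φ π ξ) : ⟪ξ, ξ⟫ = 1 := by
  rw [inner_self_eq_norm_sq_to_K, hGNS.norm_one]
  norm_num

theorem statement_6_general {Γ : Type*} [Group Γ] {H : Type*} [NormedAddCommGroup H]
    [InnerProductSpace ℂ H] [CompleteSpace H]
    (φ : WG Γ → ℂ) (hcentral : IsSCentral φ)
    (π : WG Γ →* (H →L[ℂ] H)) (ξ : H) (hGNS : IsGNS φ π ξ)
    (hfact : IsFactorial π) :
    ∀ (g : WG Γ) (x y : H),
      Tendsto (fun n => ⟪y, π (omegaW n * g * omegaW n) x⟫) atTop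
        (𝓝 (φ g * ⟪y, x⟫)) := by
  intro g x y
  set A : ℕ → H →L[ℂ] H := fun n => π (omegaW n * g * omegaW n)
  have hA : ∀ n, ‖A n‖ ≤ 1 := fun n => (A n).opNorm_le_bound zero_le_one fun z => by
    rw [ContinuousLinearMap.norm_map_of_mem_unitary (hGNS.unitary _), one_mul]
  have hcluster : ∀ T, MapClusterPt (matrixCoeff T) atTop (matrixCoeff ∘ A) → T = φ g • 1 := by
    intro T hT
    have hcomm : T ∈ commutant (repSet π) := by
      rintro _ ⟨h, rfl⟩
      exact mul_comm_of_mapClusterPt hT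
        ((eventually_commute_omegaW_conj g h).mono fun n hn => (hn.map π).eq)
    have hvN : T ∈ vN π := fun S hS =>
      mul_comm_of_mapClusterPt hT (Eventually.of_forall fun n => (hS _ ⟨_, rfl⟩).symm)
    obtain ⟨c, rfl⟩ := hfact T ⟨hcomm, hvN⟩
    have hc : ⟪ξ, (c • (1 : H →L[ℂ] H)) ξ⟫ = φ g :=
      inner_apply_eq_of_mapClusterPt hT (Eventually.of_forall fun n => by
        rw [← hGNS.inner_eq, hcentral.apply_omegaW_conj])
    rw [smul_apply, one_apply_eq_self, inner_smul_right,
      hGNS.inner_self, mul_one] at hc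
    rw [hc]
  have hlim := tendsto_inner_apply_of_unique_mapClusterPt hA hcluster x y
  rwa [smul_apply, one_apply_eq_self, inner_smul_right] at hlim

theorem statement_6 {Γ : Type*} [Group Γ] {H : Type*} [NormedAddCommGroup H]
    [InnerProductSpace ℂ H] [CompleteSpace H]
    (φ : WG Γ → ℂ) (hstate : IsState φ) (hcentral : IsSCentral φ)
    (π : WG Γ →* (H →L[ℂ] H)) (ξ : H) (hGNS : IsGNS φ π ξ)
    (hfact : IsFactorial π) :
    ∀ (g : WG Γ) (x y : H),
      Tendsto (fun n => ⟪y, π (omegaW n * g * omegaW n) x⟫) atTop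
        (𝓝 (φ g * ⟪y, x⟫)) :=
  statement_6_general φ hcentral π ξ hGNS hfact

end DN
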